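/- Let r > 0 be real and k ≥ 3 an integer, and for 0 ≤ m < k define C_{m,k,r} as the iterated integral ∫₀^∞ dy₂ ∫_{y₂}^∞ dy₃ ⋯ ∫_{y_m}^∞ dy_{m+1} e^{−r y_{m+1}} ∫₀^{y_{m+1}+(m+1)} dy_{m+2} ∫₀^{y_{m+2}+1} dy_{m+3} ⋯ ∫₀^{y_{k−1}+1} dy_k. Then C_{m,k,r} ≤ c·(2(er+1)/r)^{k−1}·(er+1)^{−m}, where c = e^{2+1/12}/2. -/

import Mathlib

open MeasureTheory

/-- Nested integrals `∫₀^{z+1} dy ∫₀^{y+1} ⋯` with `t` integration variables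
(integrand the constant 1). -/
noncomputable def nestInt : ℕ → ℝ → ℝ
  | 0, _ => 1
  | (t+1), z => ∫ y in (0:ℝ)..(z+1), nestInt t y

/-- The inner block of integrals of `C_{m,k,r}`:
`∫₀^{y+(m+1)} dy_{m+2} ∫₀^{y_{m+2}+1} dy_{m+3} ⋯ ∫₀^{y_{k−1}+1} dy_k`,
interpreted as `1` when there are no inner variables (`m = k − 1`). -/
noncomputable def innerBlock (k m : ℕ) (y : ℝ) : ℝ :=
  if k ≤ m + 1 then 1 else ∫ z in (0:ℝ)..(y + m + 1), nestInt (k - m - 2) z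

/-- The outer block: `outerBlock r k m t a` is
`∫_a^∞ dy ∫_y^∞ ⋯` (`t` outer variables) applied to `e^{−r y_{m+1}}·innerBlock`,
so that `C_{m,k,r} = outerBlock r k m m 0` (with the convention `y₁ = 0`). -/
noncomputable def outerBlock (r : ℝ) (k m : ℕ) : ℕ → ℝ → ℝ
  | 0, a => Real.exp (-(r * a)) * innerBlock k m a
  | (t+1), a => ∫ y in Set.Ioi a, outerBlock r k m t y


open Filter

theorem nest_facts (t : ℕ) : MonotoneOn (nestInt t) (Set.Ici (0:ℝ)) ∧
    (∀ z, 0 ≤ z → 0 ≤ nestInt t z ∧ nestInt t z ≤ (z + t)^t / t.factorial) := by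
  induction t with
  | zero =>
    constructor
    · intro a _ b _ _; simp [nestInt]
    · intro z hz; simp [nestInt]
  | succ t ih =>
    obtain ⟨hmono, hb⟩ := ih
    have hint : ∀ b : ℝ, 0 ≤ b → IntervalIntegrable (nestInt t) volume 0 b := by
      intro b hb0
      exact (hmono.mono (by rw [Set.uIcc_of_le hb0]; exact Set.Icc_subset_Ici_self)).intervalIntegrable
    have hnn : ∀ z, 0 ≤ z → 0 ≤ nestInt (t+1) z := by
      intro z hz
      show 0 ≤ ∫ y in (0:ℝ)..(z+1), nestInt t y
      exact intervalIntegral.integral_nonneg (by linarith) (fun u hu => (hb u hu.1).1)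
    constructor
    · intro z₁ h1 z₂ h2 h12
      show (∫ y in (0:ℝ)..(z₁+1), nestInt t y) ≤ ∫ y in (0:ℝ)..(z₂+1), nestInt t y
      apply intervalIntegral.integral_mono_interval le_rfl (by simp at h1 ⊢; linarith)
        (by linarith)
      · filter_upwards [MeasureTheory.ae_restrict_mem measurableSet_Ioc] with y hy
        exact (hb y hy.1.le).1
      · exact hint _ (by simp at h2; linarith)
    · intro z hz
      refine ⟨hnn z hz, ?_⟩
      show (∫ y in (0:ℝ)..(z+1), nestInt t y) ≤ _
      have step1 : (∫ y in (0:ℝ)..(z+1), nestInt t y) ≤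
          ∫ y in (0:ℝ)..(z+1), (y + t)^t / t.factorial := by
        apply intervalIntegral.integral_mono_on (by linarith) (hint _ (by linarith))
        · exact (Continuous.intervalIntegrable (by continuity) _ _)
        · intro u hu; exact (hb u hu.1).2
      have hcomp := intervalIntegral.integral_comp_add_right (a := (0:ℝ)) (b := z+1)
        (fun y => y^t) (t:ℝ)
      have hpow := integral_pow (a := (0:ℝ)+t) (b := z+1+t) t
      have step2 : (∫ y in (0:ℝ)..(z+1), (y + t)^t / t.factorial)
          = ((z+1+t)^(t+1) - (t:ℝ)^(t+1)) / (t+1) / t.factorial := by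
        rw [intervalIntegral.integral_div, hcomp, hpow]
        norm_num
      rw [step2] at step1
      refine le_trans step1 ?_
      have h1 : ((z+1+t)^(t+1) - (t:ℝ)^(t+1)) / (t+1) / t.factorial ≤
          (z+1+t)^(t+1) / (t+1) / t.factorial := by
        gcongr
        exact sub_le_self _ (by positivity)
      refine le_trans h1 (le_of_eq ?_)
      rw [Nat.factorial_succ]
      push_cast
      rw [div_div]
      congr 1 <;> ring

theorem innerBlock_facts (k m : ℕ) (hm : m < k) (y : ℝ) (hy : 0 ≤ y) :
    0 ≤ innerBlock k m y ∧
      innerBlock k m y ≤ (y + (k-1:ℕ))^(k-1-m) / (Nat.factorial (k-1-m)) := by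
  by_cases hc : k ≤ m + 1
  · have hn : k - 1 - m = 0 := by omega
    rw [innerBlock, if_pos hc, hn]
    norm_num
  · rw [innerBlock, if_neg hc]
    set t := k - m - 2 with ht
    obtain ⟨hmono, hb⟩ := nest_facts t
    have hub : (0:ℝ) ≤ y + m + 1 := by positivity
    have hint : IntervalIntegrable (nestInt t) volume 0 (y+m+1) :=
      (hmono.mono (by rw [Set.uIcc_of_le hub]; exact Set.Icc_subset_Ici_self)).intervalIntegrable
    constructor
    · exact intervalIntegral.integral_nonneg hub (fun u hu => (hb u hu.1).1)
    · have step1 : (∫ z in (0:ℝ)..(y+m+1), nestInt t z) ≤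
          ∫ z in (0:ℝ)..(y+m+1), (z + t)^t / t.factorial := by
        apply intervalIntegral.integral_mono_on hub hint
        · exact (Continuous.intervalIntegrable (by continuity) _ _)
        · intro u hu; exact (hb u hu.1).2
      have hcomp := intervalIntegral.integral_comp_add_right (a := (0:ℝ)) (b := y+m+1)
        (fun z => z^t) (t:ℝ)
      have hpow := integral_pow (a := (0:ℝ)+t) (b := y+m+1+t) t
      have step2 : (∫ z in (0:ℝ)..(y+m+1), (z + t)^t / t.factorial)
          = ((y+m+1+t)^(t+1) - (t:ℝ)^(t+1)) / (t+1) / t.factorial := by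
        rw [intervalIntegral.integral_div, hcomp, hpow]
        norm_num
      rw [step2] at step1
      refine le_trans step1 ?_
      have h1 : ((y+m+1+t)^(t+1) - (t:ℝ)^(t+1)) / (t+1) / t.factorial ≤
          (y+m+1+t)^(t+1) / (t+1) / t.factorial := by
        gcongr
        exact sub_le_self _ (by positivity)
      refine le_trans h1 (le_of_eq ?_)
      have e1 : k - 1 - m = t + 1 := by omega
      have e2 : ((k-1:ℕ):ℝ) = (m:ℝ) + 1 + t := by
        have : k - 1 = m + 1 + t := by omega
        rw [this]; push_cast; ring
      rw [e1, e2, Nat.factorial_succ]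
      push_cast
      rw [div_div]
      congr 1 <;> ring

noncomputable def gfun (r c : ℝ) (p : ℕ) (y : ℝ) : ℝ :=
  Real.exp (-(r*y)) * (y + c)^p / (Nat.factorial p)

lemma gfun_cont (r c : ℝ) (p : ℕ) : Continuous (gfun r c p) := by
  unfold gfun; fun_prop

lemma gfun_nonneg {c : ℝ} (r : ℝ) (hc : 0 ≤ c) (p : ℕ) {y : ℝ} (hy : 0 ≤ y) :
    0 ≤ gfun r c p y := by
  have h : (0:ℝ) ≤ y + c := by linarith
  unfold gfun; positivity

lemma single_le_exp {x : ℝ} (hx : 0 ≤ x) (p : ℕ) : x^p / p.factorial ≤ Real.exp x := by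
  refine le_trans ?_ (Real.sum_le_exp_of_nonneg hx (p+1))
  exact Finset.single_le_sum (f := fun i => x^i/(Nat.factorial i))
    (fun i _ => by positivity) (Finset.self_mem_range_succ p)

lemma gfun_le {r c : ℝ} (hr : 0 < r) (hc : 0 ≤ c) (p : ℕ) {y : ℝ} (hy : 0 ≤ y) :
    gfun r c p y ≤ (2/r)^p * Real.exp (r*c/2) * Real.exp (-(r/2)*y) := by
  have hyc : (0:ℝ) ≤ y + c := by linarith
  have h2 := single_le_exp (x := r/2*(y+c)) (by positivity) p
  rw [mul_pow] at h2
  have h3 : (y+c)^p / p.factorial ≤ (2/r)^p * Real.exp (r/2*(y+c)) := by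
    have h4 := mul_le_mul_of_nonneg_left h2 (show (0:ℝ) ≤ (2/r)^p by positivity)
    calc (y+c)^p / p.factorial
        = (2/r)^p * ((r/2)^p * (y+c)^p / p.factorial) := by
          rw [mul_div_assoc', ← mul_assoc, ← mul_pow]
          have : (2/r) * (r/2) = 1 := by field_simp
          rw [this, one_pow, one_mul]
      _ ≤ (2/r)^p * Real.exp (r/2*(y+c)) := h4
  have h5 : Real.exp (-(r*y)) * Real.exp (r/2*(y+c)) =
      Real.exp (r*c/2) * Real.exp (-(r/2)*y) := by
    rw [← Real.exp_add, ← Real.exp_add]; ring_nf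
  calc gfun r c p y = Real.exp (-(r*y)) * ((y+c)^p / p.factorial) := by
        unfold gfun; ring
    _ ≤ Real.exp (-(r*y)) * ((2/r)^p * Real.exp (r/2*(y+c))) := by
        exact mul_le_mul_of_nonneg_left h3 (Real.exp_nonneg _)
    _ = (2/r)^p * (Real.exp (-(r*y)) * Real.exp (r/2*(y+c))) := by ring
    _ = (2/r)^p * Real.exp (r*c/2) * Real.exp (-(r/2)*y) := by rw [h5]; ring

lemma gfun_integrableOn {r c : ℝ} (hr : 0 < r) (hc : 0 ≤ c) (p : ℕ) {a : ℝ} (ha : 0 ≤ a) :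
    IntegrableOn (gfun r c p) (Set.Ioi a) := by
  apply Integrable.mono'
    ((exp_neg_integrableOn_Ioi a (half_pos hr)).const_mul ((2/r)^p * Real.exp (r*c/2)))
  · exact (gfun_cont r c p).aestronglyMeasurable.restrict
  · filter_upwards [ae_restrict_mem measurableSet_Ioi] with y hy
    have hy0 : (0:ℝ) ≤ y := le_trans ha (le_of_lt hy)
    rw [Real.norm_eq_abs, abs_of_nonneg (gfun_nonneg r hc p hy0)]
    exact gfun_le hr hc p hy0

lemma tendsto_gzero {r : ℝ} (c : ℝ) (hr : 0 < r) (q : ℕ) :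
    Tendsto (fun y => Real.exp (-(r*y)) * (y+c)^q) atTop (nhds 0) := by
  have h1 : Tendsto (fun y:ℝ => r*(y+c)) atTop atTop :=
    (tendsto_atTop_add_const_right atTop c tendsto_id).const_mul_atTop hr
  have h2 := (Real.tendsto_pow_mul_exp_neg_atTop_nhds_zero q).comp h1
  have h3 := h2.mul_const (Real.exp (r*c) / r^q)
  rw [zero_mul] at h3
  refine h3.congr (fun y => ?_)
  simp only [Function.comp]
  rw [mul_pow, Real.exp_neg]
  rw [show r*(y+c) = r*y + r*c by ring, Real.exp_add]
  have e1 : Real.exp (r*y) ≠ 0 := Real.exp_ne_zero _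
  have e2 : Real.exp (r*c) ≠ 0 := Real.exp_ne_zero _
  have e3 : (r:ℝ)^q ≠ 0 := by positivity
  rw [Real.exp_neg]
  field_simp

lemma gfun_hasDeriv {r c : ℝ} (hr : 0 < r) (p : ℕ) (y : ℝ) :
    HasDerivAt (fun x => -(Real.exp (-(r*x)) * (x+c)^(p+1) / ((Nat.factorial (p+1)) * r)))
      (gfun r c (p+1) y - gfun r c p y / r) y := by
  have h1 : HasDerivAt (fun x => Real.exp (-(r*x))) (Real.exp (-(r*y)) * (-r)) y := by
    have hi : HasDerivAt (fun x : ℝ => -(r*x)) (-r) y := by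
      simpa using ((hasDerivAt_id y).const_mul r).fun_neg
    exact (Real.hasDerivAt_exp (-(r*y))).comp y hi
  have h2 : HasDerivAt (fun x : ℝ => (x+c)^(p+1)) (((p:ℝ)+1) * (y+c)^p) y := by
    have := ((hasDerivAt_id y).add_const c).fun_pow (p+1)
    simpa using this
  have h3 := ((h1.mul h2).div_const ((Nat.factorial (p+1)) * r)).neg
  refine h3.congr_deriv ?_
  unfold gfun
  have hf : ((Nat.factorial (p+1)):ℝ) ≠ 0 := by positivity
  have hf' : ((Nat.factorial p):ℝ) ≠ 0 := by positivity
  rw [Nat.factorial_succ]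
  push_cast
  field_simp
  ring

lemma int_g_zero {r c : ℝ} (hr : 0 < r) (hc : 0 ≤ c) {a : ℝ} (ha : 0 ≤ a) :
    ∫ y in Set.Ioi a, gfun r c 0 y = gfun r c 0 a / r := by
  have hD : ∀ x ∈ Set.Ici a, HasDerivAt (fun x => -(Real.exp (-(r*x))/r))
      (Real.exp (-(r*x))) x := by
    intro x _
    have h1 : HasDerivAt (fun x => Real.exp (-(r*x))) (Real.exp (-(r*x)) * (-r)) x := by
      have hi : HasDerivAt (fun x : ℝ => -(r*x)) (-r) x := by
        simpa using ((hasDerivAt_id x).const_mul r).fun_neg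
      exact (Real.hasDerivAt_exp (-(r*x))).comp x hi
    have h2 := (h1.div_const r).neg
    refine h2.congr_deriv ?_
    field_simp
  have hT : Tendsto (fun x => -(Real.exp (-(r*x))/r)) atTop (nhds 0) := by
    have := ((tendsto_gzero (r := r) 0 hr 0).div_const r).neg
    simp only [pow_zero, mul_one, neg_zero, zero_div] at this
    exact this
  have hI : IntegrableOn (fun y => Real.exp (-(r*y))) (Set.Ioi a) := by
    have := exp_neg_integrableOn_Ioi a hr
    simpa [neg_mul] using this
  have key := integral_Ioi_of_hasDerivAt_of_tendsto' hD hI hT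
  have e : ∀ y : ℝ, gfun r c 0 y = Real.exp (-(r*y)) := by
    intro y; simp [gfun]
  simp only [e]
  rw [key]; ring

lemma int_g_succ {r c : ℝ} (hr : 0 < r) (hc : 0 ≤ c) (p : ℕ) {a : ℝ} (ha : 0 ≤ a) :
    ∫ y in Set.Ioi a, gfun r c (p+1) y
      = gfun r c (p+1) a / r + (1/r) * ∫ y in Set.Ioi a, gfun r c p y := by
  have hI1 := gfun_integrableOn hr hc (p+1) ha
  have hI0 := gfun_integrableOn hr hc p ha
  have hI0' : IntegrableOn (fun y => gfun r c p y / r) (Set.Ioi a) := hI0.div_const r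
  have hD : ∀ x ∈ Set.Ici a,
      HasDerivAt (fun x => -(Real.exp (-(r*x)) * (x+c)^(p+1) / ((Nat.factorial (p+1)) * r)))
        (gfun r c (p+1) x - gfun r c p x / r) x := fun x _ => gfun_hasDeriv hr p x
  have hT : Tendsto (fun x => -(Real.exp (-(r*x)) * (x+c)^(p+1) / ((Nat.factorial (p+1)) * r)))
      atTop (nhds 0) := by
    have := ((tendsto_gzero (r := r) c hr (p+1)).div_const ((Nat.factorial (p+1)) * r)).neg
    simpa using this
  have key := integral_Ioi_of_hasDerivAt_of_tendsto' hD (hI1.sub hI0') hT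
  rw [integral_sub hI1 hI0', integral_div] at key
  have e : (0:ℝ) - -(Real.exp (-(r*a)) * (a+c)^(p+1) / ((Nat.factorial (p+1)) * r))
      = gfun r c (p+1) a / r := by
    unfold gfun
    rw [div_div]
    ring
  rw [e] at key
  have : (∫ y in Set.Ioi a, gfun r c p y) / r = (1/r) * ∫ y in Set.Ioi a, gfun r c p y := by ring
  linarith [key]

lemma int_g {r c : ℝ} (hr : 0 < r) (hc : 0 ≤ c) (p : ℕ) {a : ℝ} (ha : 0 ≤ a) :
    ∫ y in Set.Ioi a, gfun r c p y
      = ∑ q ∈ Finset.range (p+1), gfun r c (p - q) a * (r⁻¹)^(q+1) := by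
  induction p with
  | zero =>
    rw [int_g_zero hr hc ha]
    simp [div_eq_mul_inv]
  | succ p ih =>
    rw [int_g_succ hr hc p ha, ih,
      Finset.sum_range_succ' (fun q => gfun r c (p + 1 - q) a * (r⁻¹)^(q+1)) (p+1)]
    simp only [Nat.add_sub_add_right, Nat.sub_zero]
    rw [Finset.mul_sum, add_comm]
    congr 1
    · apply Finset.sum_congr rfl
      intro q _
      rw [pow_succ]
      ring
    · rw [pow_one, div_eq_mul_inv]

def cf : ℕ → ℕ → ℕ
  | 0, i => if i = 0 then 1 else 0
  | (t+1), i => ∑ j ∈ Finset.range (i+1), cf t j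

lemma sum_choose (t i : ℕ) :
    ∑ j ∈ Finset.range (i+1), Nat.choose (t+j) j = Nat.choose (t+1+i) i := by
  induction i with
  | zero => simp
  | succ i ih =>
    rw [Finset.sum_range_succ, ih]
    have h1 : t + 1 + (i+1) = (t+1+i) + 1 := by omega
    have h2 : t + (i+1) = t + 1 + i := by omega
    rw [h1, h2, Nat.choose_succ_succ]

lemma cf_succ_eq (t i : ℕ) : cf (t+1) i = Nat.choose (t+i) i := by
  induction t generalizing i with
  | zero => simp [cf]
  | succ t ih =>
    show (∑ j ∈ Finset.range (i+1), cf (t+1) j) = _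
    have : ∀ j, cf (t+1) j = Nat.choose (t+j) j := ih
    simp only [this]
    rw [sum_choose]

noncomputable def Bnd (r c : ℝ) (n t : ℕ) (a : ℝ) : ℝ :=
  ∑ i ∈ Finset.range (n+1), (cf t i : ℝ) * (r⁻¹)^(t+i) * gfun r c (n-i) a

lemma Bnd_integrableOn {r c : ℝ} (hr : 0 < r) (hc : 0 ≤ c) (n t : ℕ) {a : ℝ} (ha : 0 ≤ a) :
    IntegrableOn (Bnd r c n t) (Set.Ioi a) := by
  unfold Bnd
  exact integrable_finset_sum _
    (fun i _ => (gfun_integrableOn hr hc (n-i) ha).const_mul _)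

lemma Bnd_int {r c : ℝ} (hr : 0 < r) (hc : 0 ≤ c) (n t : ℕ) {a : ℝ} (ha : 0 ≤ a) :
    ∫ y in Set.Ioi a, Bnd r c n t y = Bnd r c n (t+1) a := by
  set F : ℕ → ℕ → ℝ := fun i i' => (cf t i : ℝ) * (r⁻¹)^(t+1+i') * gfun r c (n-i') a with hF
  have step1 : ∫ y in Set.Ioi a, Bnd r c n t y
      = ∑ i ∈ Finset.range (n+1), ∑ i' ∈ Finset.Ico i (n+1), F i i' := by
    unfold Bnd
    rw [integral_finset_sum _ (fun i _ => (gfun_integrableOn hr hc (n-i) ha).const_mul _)]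
    apply Finset.sum_congr rfl
    intro i hi
    have hi' : i ≤ n := by simpa [Nat.lt_succ_iff] using hi
    rw [MeasureTheory.integral_const_mul, int_g hr hc _ ha, Finset.mul_sum,
      Finset.sum_Ico_eq_sum_range]
    have hn : n + 1 - i = n - i + 1 := by omega
    rw [hn]
    apply Finset.sum_congr rfl
    intro q _
    rw [hF]
    simp only []
    have e1 : n - (i + q) = n - i - q := by omega
    have e2 : (r⁻¹)^(t+1+(i+q)) = (r⁻¹)^(t+i) * (r⁻¹)^(q+1) := by
      rw [← pow_add]; congr 1; omega
    rw [e1, e2]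
    ring
  rw [step1, ← Nat.Ico_zero_eq_range, Finset.sum_Ico_Ico_comm]
  unfold Bnd
  simp only [Nat.Ico_zero_eq_range]
  apply Finset.sum_congr rfl
  intro i' _
  have e3 : (cf (t+1) i' : ℝ) = ∑ i ∈ Finset.range (i'+1), (cf t i : ℝ) := by
    rw [show cf (t+1) i' = ∑ j ∈ Finset.range (i'+1), cf t j from rfl]
    push_cast
    rfl
  rw [e3, Finset.sum_mul, Finset.sum_mul]

/-- The key per-term combinatorial inequality. -/
lemma star_ineq (m n i s : ℕ) (hm : 1 ≤ m) (hi : i ≤ n) (hs : s = m + n) :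
    (Nat.choose (m-1+i) i : ℝ) * ((s:ℝ)^(n-i) / (Nat.factorial (n-i)))
      ≤ 2^s * (Nat.choose n i : ℝ) * (Real.exp 1)^(n-i) := by
  have hE1 : (2.7182818283:ℝ) < Real.exp 1 := Real.exp_one_gt_d9
  set E := Real.exp 1 with hE
  set j := n - i with hj
  have hij : i + j = n := by omega
  have hE0 : (0:ℝ) < E := by linarith
  have hjn : (j:ℝ) ≤ (n:ℝ) := by exact_mod_cast (by omega : j ≤ n)
  by_cases hcase : (s:ℝ) ≤ 2*E*((n:ℝ)+1-j)
  · have h1 : (Nat.choose (m-1+i) i : ℝ) ≤ 2^(m-1+i) := by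
      have h : Nat.choose (m-1+i) i ≤ 2^(m-1+i) := by
        calc Nat.choose (m-1+i) i
            ≤ ∑ b ∈ Finset.range ((m-1+i)+1), Nat.choose (m-1+i) b :=
              Finset.single_le_sum (fun b _ => Nat.zero_le _)
                (Finset.mem_range.mpr (by omega))
          _ = 2^(m-1+i) := Nat.sum_range_choose _
      exact_mod_cast h
    have h3' : ((n:ℝ)+1-j)^j ≤ ((Nat.factorial j : ℝ) * (Nat.choose n j : ℝ)) := by
      have h3 : (n+1-j)^j ≤ Nat.descFactorial n j := Nat.pow_sub_le_descFactorial n j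
      rw [Nat.descFactorial_eq_factorial_mul_choose] at h3
      have hcast : ((n:ℝ)+1-j) = ((n+1-j : ℕ) : ℝ) := by
        have hj1 : j ≤ n + 1 := by omega
        push_cast [Nat.cast_sub hj1]
        ring
      rw [hcast]
      exact_mod_cast h3
    have hA : ((s:ℝ))^j ≤ (2*E)^j * ((Nat.factorial j : ℝ) * (Nat.choose n j : ℝ)) := by
      calc ((s:ℝ))^j ≤ (2*E*((n:ℝ)+1-j))^j := by
            apply pow_le_pow_left₀ (by positivity) hcase
        _ = (2*E)^j * ((n:ℝ)+1-j)^j := by rw [mul_pow]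
        _ ≤ (2*E)^j * ((Nat.factorial j : ℝ) * (Nat.choose n j : ℝ)) := by
            apply mul_le_mul_of_nonneg_left h3' (by positivity)
    have hfj : (0:ℝ) < (Nat.factorial j : ℝ) := by positivity
    calc (Nat.choose (m-1+i) i : ℝ) * ((s:ℝ)^j / (Nat.factorial j))
        ≤ 2^(m-1+i) * (((2*E)^j * ((Nat.factorial j : ℝ) * (Nat.choose n j : ℝ))) / (Nat.factorial j)) := by
          apply mul_le_mul h1 (by gcongr) (by positivity) (by positivity)
      _ = 2^(m-1+i) * 2^j * E^j * (Nat.choose n j : ℝ) := by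
          field_simp
          ring
      _ = 2^(m-1+i+j) * (Nat.choose n i : ℝ) * E^j := by
          rw [pow_add]
          have hcs : Nat.choose n j = Nat.choose n i := by
            rw [hj]; exact Nat.choose_symm hi
          rw [hcs]; ring
      _ ≤ 2^s * (Nat.choose n i : ℝ) * E^j := by
          have h2 : (2:ℝ)^(m-1+i+j) ≤ 2^s := by
            apply pow_le_pow_right₀ (by norm_num) (by omega)
          apply mul_le_mul_of_nonneg_right (mul_le_mul_of_nonneg_right h2 (by positivity))
            (by positivity)
  · push_neg at hcase
    have hfi : (0:ℝ) < (Nat.factorial i : ℝ) := by positivity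
    have hfj : (0:ℝ) < (Nat.factorial j : ℝ) := by positivity
    have hfn : (0:ℝ) < (Nat.factorial n : ℝ) := by positivity
    have h1 : (Nat.choose (m-1+i) i : ℝ) ≤ (s:ℝ)^i / (Nat.factorial i) := by
      rw [le_div_iff₀ hfi]
      have hN : Nat.choose (m-1+i) i * Nat.factorial i ≤ s^i := by
        have e := Nat.descFactorial_eq_factorial_mul_choose (m-1+i) i
        have h2 := Nat.descFactorial_le_pow (m-1+i) i
        have h3 : (m-1+i)^i ≤ s^i := Nat.pow_le_pow_left (by omega) i
        rw [mul_comm, ← e]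
        exact le_trans h2 h3
      exact_mod_cast hN
    have hfact : (Nat.choose n i : ℝ) * (Nat.factorial i) * (Nat.factorial j) = (Nat.factorial n) := by
      have h := Nat.choose_mul_factorial_mul_factorial hi
      rw [hj]
      exact_mod_cast h
    have hmain : (s:ℝ)^n / (Nat.factorial n) ≤ 2^s * E^j := by
      have step1 : (s:ℝ)^n / (Nat.factorial n) ≤ 2^n * Real.exp ((s:ℝ)/2) := by
        have h := single_le_exp (x := (s:ℝ)/2) (by positivity) n
        rw [div_pow] at h
        rw [div_le_iff₀ hfn] at h ⊢
        calc (s:ℝ)^n = 2^n * ((s:ℝ)^n / 2^n) := by field_simp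
          _ ≤ 2^n * (Real.exp ((s:ℝ)/2) * (Nat.factorial n)) := by gcongr
          _ = 2^n * Real.exp ((s:ℝ)/2) * (Nat.factorial n) := by ring
      refine le_trans step1 ?_
      set L := Real.log 2 with hL
      have hL1 : (0.6931471803:ℝ) < L := Real.log_two_gt_d9
      have hL2 : L < 1 := lt_trans Real.log_two_lt_d9 (by norm_num)
      have hexp2 : (2:ℝ) = Real.exp L := (Real.exp_log (by norm_num)).symm
      have e2n : (2:ℝ)^n = Real.exp ((n:ℝ) * L) := by
        rw [hexp2, ← Real.exp_nat_mul]
      have e2s : (2:ℝ)^s = Real.exp ((s:ℝ) * L) := by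
        rw [hexp2, ← Real.exp_nat_mul]
      have eEj : E^j = Real.exp (j:ℝ) := by
        rw [hE, ← Real.exp_nat_mul, mul_one]
      rw [e2n, e2s, eEj, ← Real.exp_add, ← Real.exp_add, Real.exp_le_exp]
      -- n*L + s/2 ≤ s*L + j
      have hle1 : (1:ℝ) ≤ (L - 1/2)*(2*E) := by
        nlinarith [mul_nonneg (le_of_lt (sub_pos.mpr hL1)) (le_of_lt (sub_pos.mpr hE1))]
      have hx0 : (0:ℝ) ≤ (n:ℝ)+1-j := by linarith
      have key1 : (L - 1/2) * (2*E*((n:ℝ)+1-j)) ≤ (L-1/2)*s :=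
        mul_le_mul_of_nonneg_left (le_of_lt hcase) (by linarith)
      have key2 : ((n:ℝ)+1-j) ≤ (L-1/2)*(2*E*((n:ℝ)+1-j)) := by
        nlinarith [mul_nonneg (by linarith : (0:ℝ) ≤ (L-1/2)*(2*E) - 1) hx0]
      have keyn : (n:ℝ)*L ≤ n := mul_le_of_le_one_right (Nat.cast_nonneg n) (le_of_lt hL2)
      linarith
    calc (Nat.choose (m-1+i) i : ℝ) * ((s:ℝ)^j / (Nat.factorial j))
        ≤ ((s:ℝ)^i / (Nat.factorial i)) * ((s:ℝ)^j / (Nat.factorial j)) := by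
          apply mul_le_mul_of_nonneg_right h1 (by positivity)
      _ = ((s:ℝ)^n / (Nat.factorial n)) * (Nat.choose n i : ℝ) := by
          have hC0 : ((Nat.choose n i : ℝ)) ≠ 0 :=
            ne_of_gt (by exact_mod_cast Nat.choose_pos hi)
          have hfi' : ((Nat.factorial i : ℝ)) ≠ 0 := ne_of_gt hfi
          have hfj' : ((Nat.factorial j : ℝ)) ≠ 0 := ne_of_gt hfj
          have hfn' : ((Nat.factorial n : ℝ)) ≠ 0 := ne_of_gt hfn
          field_simp
          rw [← pow_add, hij]
          linear_combination (-(s:ℝ)^n) * hfact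
      _ ≤ (2^s * E^j) * (Nat.choose n i : ℝ) := by
          apply mul_le_mul_of_nonneg_right hmain (by positivity)
      _ = 2^s * (Nat.choose n i : ℝ) * E^j := by ring

lemma outer_facts (r : ℝ) (hr : 0 < r) (k m : ℕ) (hm : m < k) :
    ∀ t, ∀ a : ℝ, 0 ≤ a →
      0 ≤ outerBlock r k m t a ∧
        outerBlock r k m t a ≤ Bnd r ((k-1:ℕ):ℝ) (k-1-m) t a := by
  have hc : (0:ℝ) ≤ ((k-1:ℕ):ℝ) := Nat.cast_nonneg _
  intro t
  induction t with
  | zero =>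
    intro a ha
    obtain ⟨h0, h1⟩ := innerBlock_facts k m hm a ha
    constructor
    · exact mul_nonneg (Real.exp_nonneg _) h0
    · show Real.exp (-(r*a)) * innerBlock k m a ≤ _
      have hB0 : Bnd r ((k-1:ℕ):ℝ) (k-1-m) 0 a = gfun r ((k-1:ℕ):ℝ) (k-1-m) a := by
        unfold Bnd
        rw [Finset.sum_eq_single 0]
        · norm_num [cf]
        · intro i _ hne
          simp [cf, hne]
        · intro h
          exact absurd (Finset.mem_range.mpr (Nat.succ_pos _)) h
      rw [hB0]
      unfold gfun
      rw [mul_div_assoc]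
      exact mul_le_mul_of_nonneg_left h1 (Real.exp_nonneg _)
  | succ t ih =>
    intro a ha
    constructor
    · show 0 ≤ ∫ y in Set.Ioi a, outerBlock r k m t y
      apply setIntegral_nonneg measurableSet_Ioi
      intro y hy
      exact (ih y (le_trans ha (le_of_lt hy))).1
    · show (∫ y in Set.Ioi a, outerBlock r k m t y) ≤ _
      have hle : (∫ y in Set.Ioi a, outerBlock r k m t y)
          ≤ ∫ y in Set.Ioi a, Bnd r ((k-1:ℕ):ℝ) (k-1-m) t y := by
        apply integral_mono_of_nonneg
        · filter_upwards [ae_restrict_mem measurableSet_Ioi] with y hy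
          exact (ih y (le_trans ha (le_of_lt hy))).1
        · exact Bnd_integrableOn hr hc _ t ha
        · filter_upwards [ae_restrict_mem measurableSet_Ioi] with y hy
          exact (ih y (le_trans ha (le_of_lt hy))).2
      exact hle.trans_eq (Bnd_int hr hc _ t ha)

theorem stmt11 (r : ℝ) (hr : 0 < r) (k m : ℕ) (hk : 3 ≤ k) (hm : m < k) :
    outerBlock r k m m 0 ≤
      (Real.exp (2 + 1/12) / 2) * (2 * (Real.exp 1 * r + 1) / r) ^ (k - 1) *
        ((Real.exp 1 * r + 1) ^ m)⁻¹ := by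
  have hE1 : (2.7182818283:ℝ) < Real.exp 1 := Real.exp_one_gt_d9
  set E := Real.exp 1 with hE
  have hE0 : (0:ℝ) < E := by linarith
  set s := k - 1 with hs
  set n := k - 1 - m with hn
  have hsmn : s = m + n := by omega
  set B := E * r + 1 with hB
  have hB0 : (0:ℝ) < B := by positivity
  have hC : (1:ℝ) ≤ Real.exp (2 + 1/12) / 2 := by
    rw [le_div_iff₀ (by norm_num : (0:ℝ) < 2)]
    have h1 : E ≤ Real.exp (2+1/12) := by
      rw [hE]
      apply Real.exp_le_exp.mpr
      norm_num
    linarith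
  have hEB : E ≤ 2 * B / r := by
    rw [le_div_iff₀ hr]
    nlinarith
  have h2Br : (0:ℝ) < 2 * B / r := by positivity
  rcases Nat.eq_zero_or_pos m with hm0 | hm1
  · -- m = 0
    subst hm0
    have hn' : n = s := by omega
    have key := (innerBlock_facts k 0 hm 0 le_rfl).2
    have h00 : outerBlock r k 0 0 0 = innerBlock k 0 0 := by
      show Real.exp (-(r * 0)) * innerBlock k 0 0 = _
      norm_num
    rw [h00]
    have hchain : innerBlock k 0 0 ≤ (2 * B / r)^s := by
      calc innerBlock k 0 0 ≤ (0 + ((k-1:ℕ):ℝ))^(k-1-0) / (Nat.factorial (k-1-0)) := key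
        _ = (((k-1:ℕ):ℝ))^s / (Nat.factorial s) := by norm_num [hs]
        _ ≤ Real.exp ((k-1:ℕ):ℝ) := single_le_exp (Nat.cast_nonneg _) s
        _ = E^s := by
            rw [hE, ← Real.exp_nat_mul, mul_one]
        _ ≤ (2 * B / r)^s := pow_le_pow_left₀ (le_of_lt hE0) hEB s
    refine le_trans hchain ?_
    rw [pow_zero, inv_one, mul_one]
    exact le_mul_of_one_le_left (by positivity) hC
  · -- 1 ≤ m
    have key := (outer_facts r hr k m hm m 0 le_rfl).2
    refine le_trans key ?_
    have hg0 : ∀ p : ℕ, gfun r ((k-1:ℕ):ℝ) p 0 = (((k-1:ℕ):ℝ))^p / (Nat.factorial p) := by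
      intro p
      unfold gfun
      norm_num
    have hcf : ∀ i : ℕ, cf m i = Nat.choose (m-1+i) i := by
      intro i
      obtain ⟨m', rfl⟩ : ∃ m', m = m' + 1 := ⟨m - 1, by omega⟩
      rw [cf_succ_eq]
      norm_num
    -- Bnd at 0 is bounded by the reflected target sum
    have hstep : Bnd r ((k-1:ℕ):ℝ) n m 0
        ≤ ∑ i ∈ Finset.range (n+1),
            2^s * (Nat.choose n (n-i) : ℝ) * E^(n-i) * (r⁻¹)^(m+i) := by
      unfold Bnd
      apply Finset.sum_le_sum
      intro i hi
      have hi' : i ≤ n := by simpa [Nat.lt_succ_iff] using hi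
      rw [hg0, hcf]
      have hsym : Nat.choose n (n-i) = Nat.choose n i := Nat.choose_symm hi'
      rw [hsym]
      have hstar := star_ineq m n i s hm1 hi' hsmn
      have hcast : (((k-1:ℕ):ℝ)) = ((s:ℕ):ℝ) := by rw [hs]
      rw [hcast]
      calc (Nat.choose (m-1+i) i : ℝ) * (r⁻¹)^(m+i) * ((s:ℝ)^(n-i) / (Nat.factorial (n-i)))
          = ((Nat.choose (m-1+i) i : ℝ) * ((s:ℝ)^(n-i) / (Nat.factorial (n-i)))) * (r⁻¹)^(m+i) := by
            ring
        _ ≤ (2^s * (Nat.choose n i : ℝ) * E^(n-i)) * (r⁻¹)^(m+i) := by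
            apply mul_le_mul_of_nonneg_right hstar (by positivity)
        _ = 2^s * (Nat.choose n i : ℝ) * E^(n-i) * (r⁻¹)^(m+i) := by ring
    refine le_trans hstep ?_
    -- the reflected sum equals 2^s * B^n * (r⁻¹)^s, which is ≤ RHS
    have hsum : ∑ i ∈ Finset.range (n+1),
        2^s * (Nat.choose n (n-i) : ℝ) * E^(n-i) * (r⁻¹)^(m+i)
        = 2^s * (r⁻¹)^s * B^n := by
      have hrefl := Finset.sum_range_reflect
        (fun j => 2^s * (Nat.choose n j : ℝ) * E^j * (r⁻¹)^(s-j)) (n+1)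
      simp only [Nat.add_sub_cancel] at hrefl
      have e1 : ∀ i ∈ Finset.range (n+1),
          2^s * (Nat.choose n (n-i) : ℝ) * E^(n-i) * (r⁻¹)^(m+i)
          = 2^s * (Nat.choose n (n-i) : ℝ) * E^(n-i) * (r⁻¹)^(s-(n-i)) := by
        intro i hi
        have hi' : i ≤ n := by simpa [Nat.lt_succ_iff] using hi
        congr 2
        omega
      rw [Finset.sum_congr rfl e1, hrefl]
      have e2 : ∀ j ∈ Finset.range (n+1),
          2^s * (Nat.choose n j : ℝ) * E^j * (r⁻¹)^(s-j)
          = (2^s * (r⁻¹)^s) * ((E*r)^j * 1^(n-j) * (Nat.choose n j : ℝ)) := by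
        intro j hj
        have hj' : j ≤ n := by simpa [Nat.lt_succ_iff] using hj
        have hjs : j ≤ s := by omega
        have hpow : (r⁻¹)^(s-j) = (r⁻¹)^s * r^j := by
          rw [pow_sub₀ _ (by positivity) hjs]
          field_simp
          rw [one_div, inv_pow, inv_mul_cancel₀ (by positivity)]
        rw [hpow, mul_pow, one_pow]
        ring
      rw [Finset.sum_congr rfl e2, ← Finset.mul_sum, ← add_pow]
    rw [hsum]
    -- RHS = C * (2B/r)^s * (B^m)⁻¹ ≥ 2^s (r⁻¹)^s B^n
    have hRHS : (Real.exp (2 + 1/12) / 2) * (2 * B / r) ^ s * ((B:ℝ) ^ m)⁻¹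
        ≥ 2^s * (r⁻¹)^s * B^n := by
      have e3 : (2 * B / r)^s = 2^s * B^s * (r⁻¹)^s := by
        rw [div_pow, mul_pow]
        field_simp
        rw [one_div, inv_pow, mul_inv_cancel₀ (by positivity)]
      have e4 : (B:ℝ)^s = B^m * B^n := by rw [← pow_add, ← hsmn]
      rw [e3, e4]
      have hBm : (0:ℝ) < B^m := by positivity
      rw [ge_iff_le]
      calc 2^s * (r⁻¹)^s * B^n
          = (2^s * (B^m * B^n) * (r⁻¹)^s) * (B^m)⁻¹ := by
            field_simp
        _ ≤ (Real.exp (2 + 1/12) / 2) * (2^s * (B^m * B^n) * (r⁻¹)^s) * ((B:ℝ)^m)⁻¹ := by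
            apply mul_le_mul_of_nonneg_right _ (by positivity)
            exact le_mul_of_one_le_left (by positivity) hC
        _ = (Real.exp (2 + 1/12) / 2) * (2^s * (B^m * B^n) * (r⁻¹)^s) * ((B:ℝ)^m)⁻¹ := rfl
    exact hRHS
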